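/- arXiv:1811.12070 — 3 statements merged into one kernel-verified Lean document; each statement's English description precedes it below -/
import Mathlib

section
/- Heyde's law of large numbers: in the BHW model, for every θ > 0, the proportion N_n/(N_n+M_n) converges to p almost surely as n → ∞. -/
/-!
Write `Tₙ = Nₙ/(Nₙ+Mₙ) - p` and `s = n + N₀ + M₀ = Nₙ + Mₙ`. Then `(s+1) Tₙ₊₁ = s Tₙ + (Xₙ₊₁ - p)`,
and since `Tₙ` is a function of `(Nₙ, Mₙ)` the defining conditional probability gives
`E[Tₙ (Xₙ₊₁ - p)] = (1-θ) E[Tₙ²]`. Squaring the recursion, `vₙ = E[Tₙ²]` satisfies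
`vₙ₊₁ ≤ (1 - θ/(s+1)) vₙ + 1/(s+1)²`, and Chung's argument (with Bernoulli's inequality) turns this
into `vₙ = O(n^(-θ/2))`. Along `nⱼ = (j+1)^m` with `mθ/2 > 1` the `v_{nⱼ}` are summable, so
`T_{nⱼ} → 0` almost surely. As `Nₙ` is nondecreasing and `nⱼ₊₁/nⱼ → 1`, the convergence of
`Nₙ/n` along `nⱼ` propagates to the whole sequence.
-/

open MeasureTheory ProbabilityTheory Filter Real Topology

theorem rpow_neg_le_rpow_neg_add_one_mul {s q : ℝ} (hs : 0 < s) (hq0 : 0 ≤ q) (hq1 : q ≤ 1) :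
    s ^ (-q) ≤ (s + 1) ^ (-q) * (1 + q / s) := by
  have hbernoulli : (s + 1) ^ q ≤ s ^ q * (1 + q / s) := by
    calc (s + 1) ^ q = s ^ q * (1 + 1 / s) ^ q := by
          rw [← mul_rpow hs.le (by positivity)]; field_simp
      _ ≤ s ^ q * (1 + q * (1 / s)) := by
          gcongr; exact rpow_one_add_le_one_add_mul_self (by linarith [one_div_pos.2 hs]) hq0 hq1
      _ = s ^ q * (1 + q / s) := by ring
  rw [rpow_neg hs.le, rpow_neg (by linarith), inv_mul_eq_div, le_div_iff₀ (by positivity),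
    inv_mul_eq_div, div_le_iff₀ (by positivity), mul_comm]
  exact hbernoulli

theorem one_sub_div_mul_rpow_neg_add_le {s θ C : ℝ} (hs : 2 ≤ s) (hθ0 : 0 < θ) (hθ2 : θ ≤ 2)
    (hCθ : 4 ≤ C * θ) :
    (1 - θ / (s + 1)) * (C * s ^ (-(θ / 2))) + 1 / (s + 1) ^ 2 ≤ C * (s + 1) ^ (-(θ / 2)) := by
  set A := (s + 1) ^ (-(θ / 2))
  have hC0 : 0 ≤ C := nonneg_of_mul_nonneg_left (by linarith) hθ0
  have hxA : (s + 1)⁻¹ ≤ A := by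
    rw [← rpow_neg_one]; exact rpow_le_rpow_of_exponent_le (by linarith) (by linarith)
  have hshift := rpow_neg_le_rpow_neg_add_one_mul (by linarith : 0 < s) (by linarith : 0 ≤ θ / 2)
    (by linarith : θ / 2 ≤ 1)
  have hcontr : 0 ≤ 1 - θ / (s + 1) := by
    rw [sub_nonneg, div_le_one (by linarith)]; linarith
  have hdrift : (1 - θ / (s + 1)) * (1 + θ / 2 / s) ≤ 1 - θ / (4 * (s + 1)) := by
    rw [← sub_nonneg]
    have : 1 - θ / (4 * (s + 1)) - (1 - θ / (s + 1)) * (1 + θ / 2 / s)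
        = θ * ((s - 2) / 4 + θ / 2) / (s * (s + 1)) := by
      field_simp; ring
    rw [this]; apply div_nonneg _ (by positivity); apply mul_nonneg hθ0.le; linarith
  have hnoise : 1 / (s + 1) ^ 2 ≤ C * A * (θ / (4 * (s + 1))) := by
    calc 1 / (s + 1) ^ 2 = (s + 1)⁻¹ * 1 / (s + 1) := by field_simp
      _ ≤ A * (C * θ / 4) / (s + 1) := by gcongr; linarith
      _ = C * A * (θ / (4 * (s + 1))) := by field_simp
  calc (1 - θ / (s + 1)) * (C * s ^ (-(θ / 2))) + 1 / (s + 1) ^ 2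
      ≤ C * A * ((1 - θ / (s + 1)) * (1 + θ / 2 / s)) + 1 / (s + 1) ^ 2 := by
        have : (1 - θ / (s + 1)) * (C * s ^ (-(θ / 2)))
            ≤ (1 - θ / (s + 1)) * (C * (A * (1 + θ / 2 / s))) := by gcongr
        linarith
    _ ≤ C * A * (1 - θ / (4 * (s + 1))) + C * A * (θ / (4 * (s + 1))) := by gcongr
    _ = C * A := by ring

theorem le_mul_rpow_neg_of_recurrence {c θ : ℝ} (hc : 1 ≤ c) (hθ0 : 0 < θ) (hθ2 : θ ≤ 2)
    {v : ℕ → ℝ} (hv1 : v 1 ≤ 1)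
    (hrec : ∀ n, 1 ≤ n → v (n + 1) ≤ (1 - θ / (n + c + 1)) * v n + 1 / (n + c + 1) ^ 2) :
    ∀ n, 1 ≤ n → v n ≤ (4 / θ + c + 1) * (n + c) ^ (-(θ / 2)) := by
  -- `C ≥ c + 1` covers `v 1 ≤ 1`, and `C θ ≥ 4` lets the drift absorb the noise `1/(n+c+1)²`.
  set C := 4 / θ + c + 1 with hC
  have hCθ : 4 ≤ C * θ := by
    rw [hC, add_assoc, add_mul, div_mul_cancel₀ _ hθ0.ne']; nlinarith
  intro n hn
  induction n, hn using Nat.le_induction with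
  | base =>
    calc v 1 ≤ 1 := hv1
      _ ≤ C * (1 + c)⁻¹ := by
        rw [← div_eq_mul_inv, one_le_div (by linarith)]; linarith [div_pos four_pos hθ0]
      _ ≤ C * ((1 : ℕ) + c) ^ (-(θ / 2)) := by
        push_cast; gcongr
        rw [← rpow_neg_one]; exact rpow_le_rpow_of_exponent_le (by linarith) (by linarith)
  | succ n hn ih =>
    have hs : 2 ≤ (n : ℝ) + c := by
      have : (1 : ℝ) ≤ n := by exact_mod_cast hn
      linarith
    have hcontr : 0 ≤ 1 - θ / (n + c + 1) := by
      rw [sub_nonneg, div_le_one (by linarith)]; linarith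
    calc v (n + 1) ≤ (1 - θ / (n + c + 1)) * v n + 1 / (n + c + 1) ^ 2 := hrec n hn
      _ ≤ (1 - θ / (n + c + 1)) * (C * (n + c) ^ (-(θ / 2))) + 1 / (n + c + 1) ^ 2 := by gcongr
      _ ≤ C * (n + c + 1) ^ (-(θ / 2)) := one_sub_div_mul_rpow_neg_add_le hs hθ0 hθ2 hCθ
      _ = C * ((n + 1 : ℕ) + c) ^ (-(θ / 2)) := by push_cast; ring_nf

theorem summable_comp_succ_pow_of_le_mul_rpow_neg {v : ℕ → ℝ} (hv0 : ∀ n, 0 ≤ v n) {C c q : ℝ}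
    (hc : 0 ≤ c) (hq : 0 < q) (hv : ∀ n, 1 ≤ n → v n ≤ C * (n + c) ^ (-q)) {m : ℕ}
    (hm : 1 < m * q) : Summable fun j : ℕ => v ((j + 1) ^ m) := by
  have hbound : ∀ j : ℕ, v ((j + 1) ^ m) ≤ C * ((j + 1 : ℕ) : ℝ) ^ (-(m * q)) := fun j => by
    have hpos : (0 : ℝ) < ((j + 1) ^ m : ℕ) := by positivity
    calc v ((j + 1) ^ m) ≤ C * (((j + 1) ^ m : ℕ) + c) ^ (-q) :=
          hv _ (Nat.one_le_pow _ _ j.succ_pos)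
      _ ≤ C * (((j + 1) ^ m : ℕ) : ℝ) ^ (-q) := by
          have hC : 0 ≤ C := by
            have := (hv0 _).trans (hv 1 le_rfl)
            exact nonneg_of_mul_nonneg_left this (by positivity)
          exact mul_le_mul_of_nonneg_left
            (rpow_le_rpow_of_nonpos hpos (by linarith) (by linarith)) hC
      _ = C * ((j + 1 : ℕ) : ℝ) ^ (-(m * q)) := by
          rw [Nat.cast_pow, ← rpow_natCast, ← rpow_mul (by positivity)]; ring_nf
  refine Summable.of_nonneg_of_le (fun j => hv0 _) hbound (Summable.mul_left _ ?_)
  exact (summable_nat_add_iff 1).mpr (summable_nat_rpow.mpr (by linarith))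

theorem tendsto_div_of_monotone_of_tendsto_div_succ_pow {u : ℕ → ℝ} {l : ℝ} (hmono : Monotone u)
    {m : ℕ} (hm : m ≠ 0)
    (h : Tendsto (fun j : ℕ => u ((j + 1) ^ m) / ((j + 1) ^ m : ℕ)) atTop (𝓝 l)) :
    Tendsto (fun n => u n / n) atTop (𝓝 l) := by
  refine tendsto_div_of_monotone_of_exists_subseq_tendsto_div u l hmono fun a ha =>
    ⟨fun j => (j + 1) ^ m, ?_, (tendsto_pow_atTop hm).comp (tendsto_add_atTop_nat 1), h⟩
  have hratio : Tendsto (fun j : ℕ => (1 + 1 / ((j : ℝ) + 1)) ^ m) atTop (𝓝 1) := by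
    simpa using (((tendsto_one_div_add_atTop_nhds_zero_nat (𝕜 := ℝ)).const_add 1).pow m)
  filter_upwards [hratio.eventually (gt_mem_nhds ha)] with j hj
  have hj1 : (0 : ℝ) < j + 1 := by positivity
  have : ((j + 1 + 1 : ℕ) : ℝ) ^ m = (1 + 1 / ((j : ℝ) + 1)) ^ m * ((j + 1 : ℕ) : ℝ) ^ m := by
    rw [← mul_pow]; congr 1; push_cast; field_simp
  push_cast at this ⊢
  rw [this]
  gcongr

theorem tendsto_div_add_iff_tendsto_div {ι : Type*} {L : Filter ι} {s : ι → ℕ}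
    (hs : Tendsto s L atTop) {f : ι → ℝ} {c l : ℝ} :
    Tendsto (fun i => f i / (s i + c)) L (𝓝 l) ↔ Tendsto (fun i => f i / s i) L (𝓝 l) := by
  have hratio : Tendsto (fun i => (s i : ℝ) / (s i + c)) L (𝓝 1) :=
    (tendsto_natCast_div_add_atTop c).comp hs
  have hne : ∀ᶠ i in L, (s i : ℝ) ≠ 0 ∧ (s i : ℝ) + c ≠ 0 := by
    have hs' : Tendsto (fun i => (s i : ℝ)) L atTop := tendsto_natCast_atTop_atTop.comp hs
    filter_upwards [hs'.eventually_gt_atTop 0, hs'.eventually_gt_atTop (-c)] with i h1 h2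
    exact ⟨h1.ne', by linarith⟩
  constructor
  · intro h
    refine (div_one l ▸ h.div hratio one_ne_zero).congr' ?_
    filter_upwards [hne] with i ⟨h1, h2⟩
    simp only [Pi.div_apply]
    field_simp
  · intro h
    refine (mul_one l ▸ h.mul hratio).congr' ?_
    filter_upwards [hne] with i ⟨h1, h2⟩
    field_simp

section

variable {Ω : Type*} {m₀ : MeasurableSpace Ω} {μ : Measure Ω}

theorem ae_tendsto_zero_of_summable_integral_sq {Y : ℕ → Ω → ℝ}
    (hint : ∀ n, Integrable (fun ω => Y n ω ^ 2) μ)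
    (hsum : Summable fun n => ∫ ω, Y n ω ^ 2 ∂μ) :
    ∀ᵐ ω ∂μ, Tendsto (fun n => Y n ω) atTop (𝓝 0) := by
  have hfinite : ∫⁻ ω, ∑' n, ENNReal.ofReal (Y n ω ^ 2) ∂μ ≠ ⊤ := by
    rw [lintegral_tsum fun n => (hint n).aemeasurable.ennreal_ofReal]
    simp_rw [← ofReal_integral_eq_lintegral_ofReal (hint _) (ae_of_all _ fun _ => sq_nonneg _)]
    rw [← ENNReal.ofReal_tsum_of_nonneg (fun n => integral_nonneg fun _ => sq_nonneg _) hsum]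
    exact ENNReal.ofReal_ne_top
  filter_upwards [ae_lt_top' (AEMeasurable.tsum fun n =>
    (hint n).aemeasurable.ennreal_ofReal) hfinite] with ω hω
  have hsq : Summable fun n => Y n ω ^ 2 :=
    (ENNReal.summable_toReal hω.ne).congr fun n => ENNReal.toReal_ofReal (sq_nonneg _)
  rw [tendsto_zero_iff_norm_tendsto_zero]
  simpa using (hsq.tendsto_atTop_zero.sqrt).congr fun n => sqrt_sq_eq_abs (Y n ω)

theorem integral_mul_eq_mul_integral_sq_of_condExp_eq {m : MeasurableSpace Ω} (hm : m ≤ m₀)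
    [IsFiniteMeasure μ] {Y ξ : Ω → ℝ} (hY : StronglyMeasurable[m] Y) {C : ℝ}
    (hYb : ∀ᵐ ω ∂μ, ‖Y ω‖ ≤ C) (hξ : Integrable ξ μ) {a : ℝ}
    (hcond : μ[ξ | m] =ᵐ[μ] fun ω => a * Y ω) :
    ∫ ω, Y ω * ξ ω ∂μ = a * ∫ ω, Y ω ^ 2 ∂μ := by
  have : IsFiniteMeasure (μ.trim hm) := isFiniteMeasure_trim hm
  calc ∫ ω, Y ω * ξ ω ∂μ = ∫ ω, (μ[Y * ξ | m]) ω ∂μ := (integral_condExp hm).symm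
    _ = ∫ ω, Y ω * (a * Y ω) ∂μ := by
        refine integral_congr_ae ?_
        filter_upwards [condExp_stronglyMeasurable_mul_of_bound hm hY hξ C hYb, hcond] with ω h1 h2
        rw [h1, Pi.mul_apply, h2]
    _ = a * ∫ ω, Y ω ^ 2 ∂μ := by rw [← integral_const_mul]; congr 1; ext ω; ring

theorem integral_sq_le_one [IsProbabilityMeasure μ] {f : Ω → ℝ} (hf : ∀ ω, |f ω| ≤ 1) :
    ∫ ω, f ω ^ 2 ∂μ ≤ 1 := by
  calc ∫ ω, f ω ^ 2 ∂μ ≤ ∫ _, (1 : ℝ) ∂μ :=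
        integral_mono_of_nonneg (ae_of_all _ fun _ => sq_nonneg _) (integrable_const 1)
          (ae_of_all _ fun ω => by
            show f ω ^ 2 ≤ 1
            rw [← sq_abs]; exact pow_le_one₀ (abs_nonneg _) (hf ω))
    _ = 1 := by simp

theorem integral_sq_le_of_mul_eq_mul_add [IsProbabilityMeasure μ] {Y Y' ξ : Ω → ℝ} {s θ : ℝ}
    (hs : 1 ≤ s) (hθ : 0 ≤ θ) (hY : AEStronglyMeasurable Y μ) (hYb : ∀ ω, |Y ω| ≤ 1)
    (hξ : AEStronglyMeasurable ξ μ) (hξb : ∀ ω, |ξ ω| ≤ 1)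
    (hstep : ∀ ω, (s + 1) * Y' ω = s * Y ω + ξ ω)
    (hcov : ∫ ω, Y ω * ξ ω ∂μ = (1 - θ) * ∫ ω, Y ω ^ 2 ∂μ) :
    ∫ ω, Y' ω ^ 2 ∂μ ≤ (1 - θ / (s + 1)) * ∫ ω, Y ω ^ 2 ∂μ + 1 / (s + 1) ^ 2 := by
  have bounded_integrable : ∀ f : Ω → ℝ, AEStronglyMeasurable f μ → (∀ ω, |f ω| ≤ 1) →
      Integrable f μ := fun f hf hfb => Integrable.of_bound hf 1 (ae_of_all _ hfb)
  have hYY : Integrable (fun ω => Y ω ^ 2) μ := bounded_integrable _ (hY.pow 2) fun ω => by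
    rw [abs_pow]; exact pow_le_one₀ (abs_nonneg _) (hYb ω)
  have hYξ : Integrable (fun ω => Y ω * ξ ω) μ := bounded_integrable _ (hY.mul hξ) fun ω => by
    rw [abs_mul]; exact mul_le_one₀ (hYb ω) (abs_nonneg _) (hξb ω)
  have hξξ : Integrable (fun ω => ξ ω ^ 2) μ := bounded_integrable _ (hξ.pow 2) fun ω => by
    rw [abs_pow]; exact pow_le_one₀ (abs_nonneg _) (hξb ω)
  have hξξ_le : ∫ ω, ξ ω ^ 2 ∂μ ≤ 1 := integral_sq_le_one hξb
  have hexpand : (s + 1) ^ 2 * ∫ ω, Y' ω ^ 2 ∂μ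
      = s ^ 2 * ∫ ω, Y ω ^ 2 ∂μ + 2 * s * ∫ ω, Y ω * ξ ω ∂μ + ∫ ω, ξ ω ^ 2 ∂μ := by
    calc (s + 1) ^ 2 * ∫ ω, Y' ω ^ 2 ∂μ
        = ∫ ω, (s ^ 2 * Y ω ^ 2 + 2 * s * (Y ω * ξ ω)) + ξ ω ^ 2 ∂μ := by
          rw [← integral_const_mul]; congr 1; ext ω
          rw [← mul_pow, hstep]; ring
      _ = _ := by
          have hlin : Integrable (fun ω => s ^ 2 * Y ω ^ 2 + 2 * s * (Y ω * ξ ω)) μ :=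
            (hYY.const_mul _).add (hYξ.const_mul _)
          rw [integral_add hlin hξξ,
            integral_add (hYY.const_mul _) (hYξ.const_mul _), integral_const_mul,
            integral_const_mul]
  have hV : 0 ≤ ∫ ω, Y ω ^ 2 ∂μ := integral_nonneg fun _ => sq_nonneg _
  rw [hcov] at hexpand
  rw [← mul_le_mul_iff_of_pos_left (by positivity : 0 < (s + 1) ^ 2), hexpand]
  have : (s + 1) ^ 2 * ((1 - θ / (s + 1)) * ∫ ω, Y ω ^ 2 ∂μ + 1 / (s + 1) ^ 2)
      = ((s + 1) ^ 2 - θ * (s + 1)) * ∫ ω, Y ω ^ 2 ∂μ + 1 := by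
    field_simp
  rw [this]
  nlinarith [mul_nonneg (mul_nonneg hθ (by linarith : 0 ≤ s - 1)) hV]

end

namespace BHW

variable {Ω : Type*} {X N M : ℕ → Ω → ℝ} {N₀ M₀ : ℕ} {p θ : ℝ}

noncomputable def proportion (N M : ℕ → Ω → ℝ) (n : ℕ) (ω : Ω) : ℝ := N n ω / (N n ω + M n ω)

theorem count_add_count (hN : ∀ n ω, N n ω = N₀ + ∑ i ∈ Finset.range n, X (i + 1) ω)
    (hM : ∀ n ω, M n ω = M₀ + n - ∑ i ∈ Finset.range n, X (i + 1) ω) (n : ℕ) (ω : Ω) :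
    N n ω + M n ω = n + (N₀ + M₀ : ℝ) := by
  rw [hN, hM]; ring

theorem count_succ (hN : ∀ n ω, N n ω = N₀ + ∑ i ∈ Finset.range n, X (i + 1) ω) (n : ℕ) (ω : Ω) :
    N (n + 1) ω = N n ω + X (n + 1) ω := by
  rw [hN, hN, Finset.sum_range_succ, add_assoc]

theorem monotone_count (hX01 : ∀ n ω, X n ω = 0 ∨ X n ω = 1)
    (hN : ∀ n ω, N n ω = N₀ + ∑ i ∈ Finset.range n, X (i + 1) ω) (ω : Ω) :
    Monotone fun n => N n ω :=
  monotone_nat_of_le_succ fun n => by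
    rw [count_succ hN]; rcases hX01 (n + 1) ω with h | h <;> simp [h]

theorem sum_mem_Icc_of_zero_or_one (hX01 : ∀ n ω, X n ω = 0 ∨ X n ω = 1) (n : ℕ) (ω : Ω) :
    ∑ i ∈ Finset.range n, X (i + 1) ω ∈ Set.Icc 0 (n : ℝ) := by
  have hX : ∀ i, X (i + 1) ω ∈ Set.Icc (0 : ℝ) 1 := fun i => by
    rcases hX01 (i + 1) ω with h | h <;> simp [h]
  constructor
  · exact Finset.sum_nonneg fun i _ => (hX i).1
  · simpa using Finset.sum_le_sum fun i (_ : i ∈ Finset.range n) => (hX i).2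

theorem proportion_mem_Icc (hX01 : ∀ n ω, X n ω = 0 ∨ X n ω = 1)
    (hN : ∀ n ω, N n ω = N₀ + ∑ i ∈ Finset.range n, X (i + 1) ω)
    (hM : ∀ n ω, M n ω = M₀ + n - ∑ i ∈ Finset.range n, X (i + 1) ω) (n : ℕ) (ω : Ω) :
    proportion N M n ω ∈ Set.Icc 0 1 := by
  obtain ⟨hS0, hSn⟩ := sum_mem_Icc_of_zero_or_one hX01 n ω
  have hN0 : 0 ≤ N n ω := by rw [hN]; positivity
  have hM0 : 0 ≤ M n ω := by rw [hM]; linarith [(Nat.cast_nonneg M₀ : (0 : ℝ) ≤ M₀)]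
  exact ⟨div_nonneg hN0 (by positivity), div_le_one_of_le₀ (by linarith) (by positivity)⟩

theorem abs_proportion_sub_le (hp : p ∈ Set.Icc 0 1) (hX01 : ∀ n ω, X n ω = 0 ∨ X n ω = 1)
    (hN : ∀ n ω, N n ω = N₀ + ∑ i ∈ Finset.range n, X (i + 1) ω)
    (hM : ∀ n ω, M n ω = M₀ + n - ∑ i ∈ Finset.range n, X (i + 1) ω) (n : ℕ) (ω : Ω) :
    |proportion N M n ω - p| ≤ 1 := by
  have := proportion_mem_Icc hX01 hN hM n ω
  exact abs_le.2 ⟨by linarith [hp.2, this.1], by linarith [hp.1, this.2]⟩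

theorem proportion_succ (hN : ∀ n ω, N n ω = N₀ + ∑ i ∈ Finset.range n, X (i + 1) ω)
    (hM : ∀ n ω, M n ω = M₀ + n - ∑ i ∈ Finset.range n, X (i + 1) ω) (hstart : 0 < N₀ + M₀)
    (p : ℝ) (n : ℕ) (ω : Ω) :
    (n + (N₀ + M₀ : ℝ) + 1) * (proportion N M (n + 1) ω - p)
      = (n + (N₀ + M₀ : ℝ)) * (proportion N M n ω - p) + (X (n + 1) ω - p) := by
  have hc : (0 : ℝ) < N₀ + M₀ := by exact_mod_cast hstart
  rw [proportion, proportion, count_add_count hN hM, count_add_count hN hM, count_succ hN]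
  push_cast
  field_simp
  ring

theorem measurable_proportion_comap (n : ℕ) :
    Measurable[MeasurableSpace.comap (fun ω => (N n ω, M n ω)) inferInstance]
      (proportion N M n) :=
  (measurable_fst.div (measurable_fst.add measurable_snd)).comp (comap_measurable _)

variable [MeasurableSpace Ω] {μ : Measure Ω}

theorem measurable_counts (hXmeas : ∀ n, Measurable (X n))
    (hN : ∀ n ω, N n ω = N₀ + ∑ i ∈ Finset.range n, X (i + 1) ω)
    (hM : ∀ n ω, M n ω = M₀ + n - ∑ i ∈ Finset.range n, X (i + 1) ω) (n : ℕ) :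
    Measurable fun ω => (N n ω, M n ω) := by
  have hS : Measurable fun ω => ∑ i ∈ Finset.range n, X (i + 1) ω :=
    Finset.measurable_sum _ fun i _ => hXmeas _
  simp_rw [hN, hM]
  exact (measurable_const.add hS).prodMk (measurable_const.sub hS)

theorem measurable_proportion (hXmeas : ∀ n, Measurable (X n))
    (hN : ∀ n ω, N n ω = N₀ + ∑ i ∈ Finset.range n, X (i + 1) ω)
    (hM : ∀ n ω, M n ω = M₀ + n - ∑ i ∈ Finset.range n, X (i + 1) ω) (n : ℕ) :
    Measurable (proportion N M n) :=
  (measurable_proportion_comap n).mono (measurable_counts hXmeas hN hM n).comap_le le_rfl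

theorem integral_proportion_sub_mul [IsFiniteMeasure μ] (hXmeas : ∀ n, Measurable (X n))
    (hX01 : ∀ n ω, X n ω = 0 ∨ X n ω = 1)
    (hN : ∀ n ω, N n ω = N₀ + ∑ i ∈ Finset.range n, X (i + 1) ω)
    (hM : ∀ n ω, M n ω = M₀ + n - ∑ i ∈ Finset.range n, X (i + 1) ω) {n : ℕ}
    (hcond : μ[X (n + 1) | MeasurableSpace.comap (fun ω => (N n ω, M n ω)) inferInstance]
        =ᵐ[μ] fun ω => θ * p + (1 - θ) * (N n ω / (N n ω + M n ω))) :
    ∫ ω, (proportion N M n ω - p) * (X (n + 1) ω - p) ∂μ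
      = (1 - θ) * ∫ ω, (proportion N M n ω - p) ^ 2 ∂μ := by
  have hG := (measurable_counts hXmeas hN hM n).comap_le
  have hXint : Integrable (X (n + 1)) μ := Integrable.of_bound (hXmeas _).aestronglyMeasurable 1
    (ae_of_all _ fun ω => by rcases hX01 (n + 1) ω with h | h <;> simp [h])
  refine integral_mul_eq_mul_integral_sq_of_condExp_eq hG
    ((measurable_proportion_comap n).sub measurable_const).stronglyMeasurable (C := 1 + |p|)
    (ae_of_all _ fun ω => ?_) (hXint.sub (integrable_const p)) ?_
  · have := proportion_mem_Icc hX01 hN hM n ω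
    calc ‖proportion N M n ω - p‖ ≤ |proportion N M n ω| + |p| := abs_sub _ _
      _ ≤ 1 + |p| := by gcongr; exact abs_le.2 ⟨by linarith [this.1], this.2⟩
  · filter_upwards [condExp_sub hXint (integrable_const p) _, hcond] with ω h1 h2
    rw [h1, Pi.sub_apply, h2, condExp_const hG]
    simp only [Pi.sub_apply, proportion]
    ring

theorem integral_sq_proportion_sub_le [IsProbabilityMeasure μ] (hp : p ∈ Set.Icc 0 1)
    (hθ0 : 0 < θ) (hθ2 : θ ≤ 2) (hXmeas : ∀ n, Measurable (X n))
    (hX01 : ∀ n ω, X n ω = 0 ∨ X n ω = 1) (hstart : 0 < N₀ + M₀)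
    (hN : ∀ n ω, N n ω = N₀ + ∑ i ∈ Finset.range n, X (i + 1) ω)
    (hM : ∀ n ω, M n ω = M₀ + n - ∑ i ∈ Finset.range n, X (i + 1) ω)
    (hcond : ∀ n, 1 ≤ n →
      μ[X (n + 1) | MeasurableSpace.comap (fun ω => (N n ω, M n ω)) inferInstance]
        =ᵐ[μ] fun ω => θ * p + (1 - θ) * (N n ω / (N n ω + M n ω))) :
    ∀ n, 1 ≤ n → ∫ ω, (proportion N M n ω - p) ^ 2 ∂μ
      ≤ (4 / θ + (N₀ + M₀ : ℝ) + 1) * (n + (N₀ + M₀ : ℝ)) ^ (-(θ / 2)) := by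
  have hc : (1 : ℝ) ≤ N₀ + M₀ := by exact_mod_cast hstart
  have hdev := abs_proportion_sub_le hp hX01 hN hM
  have hinc : ∀ n ω, |X n ω - p| ≤ 1 := fun n ω => by
    rcases hX01 n ω with h | h <;> rw [h, abs_le] <;> constructor <;> linarith [hp.1, hp.2]
  refine le_mul_rpow_neg_of_recurrence hc hθ0 hθ2 (integral_sq_le_one (hdev 1)) fun n hn => ?_
  exact integral_sq_le_of_mul_eq_mul_add (μ := μ) (s := n + (N₀ + M₀ : ℝ)) (by linarith)
    hθ0.le ((measurable_proportion hXmeas hN hM n).sub_const p).aestronglyMeasurable (hdev n)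
    ((hXmeas (n + 1)).sub_const p).aestronglyMeasurable (hinc (n + 1))
    (proportion_succ hN hM hstart p n)
    (integral_proportion_sub_mul hXmeas hX01 hN hM (hcond n hn))

theorem ae_tendsto_proportion_comp_succ_pow [IsProbabilityMeasure μ] (hp : p ∈ Set.Icc 0 1)
    (hθ0 : 0 < θ) (hθ2 : θ ≤ 2) (hXmeas : ∀ n, Measurable (X n))
    (hX01 : ∀ n ω, X n ω = 0 ∨ X n ω = 1) (hstart : 0 < N₀ + M₀)
    (hN : ∀ n ω, N n ω = N₀ + ∑ i ∈ Finset.range n, X (i + 1) ω)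
    (hM : ∀ n ω, M n ω = M₀ + n - ∑ i ∈ Finset.range n, X (i + 1) ω)
    (hcond : ∀ n, 1 ≤ n →
      μ[X (n + 1) | MeasurableSpace.comap (fun ω => (N n ω, M n ω)) inferInstance]
        =ᵐ[μ] fun ω => θ * p + (1 - θ) * (N n ω / (N n ω + M n ω)))
    {m : ℕ} (hm : 1 < m * (θ / 2)) :
    ∀ᵐ ω ∂μ, Tendsto (fun j : ℕ => proportion N M ((j + 1) ^ m) ω) atTop (𝓝 p) := by
  have hsum := summable_comp_succ_pow_of_le_mul_rpow_neg
    (fun n => integral_nonneg fun _ => sq_nonneg _) (by positivity) (by positivity)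
    (integral_sq_proportion_sub_le hp hθ0 hθ2 hXmeas hX01 hstart hN hM hcond) hm
  have hint : ∀ n, Integrable (fun ω => (proportion N M n ω - p) ^ 2) μ := fun n =>
    Integrable.of_bound
      (((measurable_proportion hXmeas hN hM n).sub_const p).pow_const 2).aestronglyMeasurable 1
      (ae_of_all _ fun ω => by
        rw [norm_pow, Real.norm_eq_abs]
        exact pow_le_one₀ (abs_nonneg _) (abs_proportion_sub_le hp hX01 hN hM n ω))
  filter_upwards [ae_tendsto_zero_of_summable_integral_sq (fun j => hint _) hsum] with ω hω
  simpa using hω.add_const p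

end BHW

theorem BHW_LLN_general
    {Ω : Type*} [MeasurableSpace Ω] (μ : Measure Ω) [IsProbabilityMeasure μ]
    (p θ : ℝ) (hp : p ∈ Set.Ioo (0 : ℝ) 1) (hθ : θ ∈ Set.Ioc (0 : ℝ) 1)
    -- the decision process, taking values in `{0, 1}`, with `P(X₁ = 1) = p`
    (X : ℕ → Ω → ℝ) (hXmeas : ∀ n, Measurable (X n))
    (hX01 : ∀ n ω, X n ω = 0 ∨ X n ω = 1)
    -- initial counts
    (N₀ M₀ : ℕ) (hstart : 0 < N₀ + M₀)
    -- the counting processes `Nₙ = N₀ + X₁ + ⋯ + Xₙ` and `Mₙ = M₀ + n − (X₁ + ⋯ + Xₙ)`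
    (N M : ℕ → Ω → ℝ)
    (hN : ∀ n ω, N n ω = N₀ + ∑ i ∈ Finset.range n, X (i + 1) ω)
    (hM : ∀ n ω, M n ω = M₀ + n - ∑ i ∈ Finset.range n, X (i + 1) ω)
    -- the defining conditional probabilities:
    -- `P(X_{n+1} = 1 | (Nₙ, Mₙ)) = θp + (1−θ) Nₙ/(Nₙ+Mₙ)` for `n ≥ 1`
    (hcond : ∀ n, 1 ≤ n →
      μ[X (n + 1) | MeasurableSpace.comap (fun ω => (N n ω, M n ω)) inferInstance]
        =ᵐ[μ] fun ω => θ * p + (1 - θ) * (N n ω / (N n ω + M n ω))) :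
    ∀ᵐ ω ∂μ, Tendsto (fun n => N n ω / (N n ω + M n ω)) atTop (nhds p) := by
  obtain ⟨m, hm⟩ := exists_nat_gt (2 / θ)
  have hmθ : 1 < m * (θ / 2) := by
    rw [div_lt_iff₀ hθ.1] at hm; linarith
  have hm0 : m ≠ 0 := by rintro rfl; norm_num at hmθ
  filter_upwards [BHW.ae_tendsto_proportion_comp_succ_pow (Set.Ioo_subset_Icc_self hp) hθ.1
    (by linarith [hθ.2]) hXmeas hX01 hstart hN hM hcond hmθ] with ω hω
  simp only [BHW.proportion, BHW.count_add_count hN hM] at hω ⊢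
  have hsub := (tendsto_div_add_iff_tendsto_div
    ((tendsto_pow_atTop hm0).comp (tendsto_add_atTop_nat 1))).1 hω
  exact (tendsto_div_add_iff_tendsto_div tendsto_id).2
    (tendsto_div_of_monotone_of_tendsto_div_succ_pow (BHW.monotone_count hX01 hN ω) hm0 hsub)

/-- Heyde's law of large numbers for the BHW model: for every `θ > 0`, the proportion
`Nₙ/(Nₙ+Mₙ)` converges to `p` almost surely. -/
theorem BHW_LLN
    {Ω : Type*} [MeasurableSpace Ω] (μ : Measure Ω) [IsProbabilityMeasure μ]
    (p θ : ℝ) (hp : p ∈ Set.Ioo (0 : ℝ) 1) (hθ : θ ∈ Set.Ioc (0 : ℝ) 1)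
    -- the decision process, taking values in `{0, 1}`, with `P(X₁ = 1) = p`
    (X : ℕ → Ω → ℝ) (hXmeas : ∀ n, Measurable (X n))
    (hX01 : ∀ n ω, X n ω = 0 ∨ X n ω = 1)
    (hX1 : μ {ω | X 1 ω = 1} = ENNReal.ofReal p)
    -- initial counts
    (N₀ M₀ : ℕ) (hstart : 0 < N₀ + M₀)
    -- the counting processes `Nₙ = N₀ + X₁ + ⋯ + Xₙ` and `Mₙ = M₀ + n − (X₁ + ⋯ + Xₙ)`
    (N M : ℕ → Ω → ℝ)
    (hN : ∀ n ω, N n ω = N₀ + ∑ i ∈ Finset.range n, X (i + 1) ω)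
    (hM : ∀ n ω, M n ω = M₀ + n - ∑ i ∈ Finset.range n, X (i + 1) ω)
    -- the defining conditional probabilities:
    -- `P(X_{n+1} = 1 | (Nₙ, Mₙ)) = θp + (1−θ) Nₙ/(Nₙ+Mₙ)` for `n ≥ 1`
    (hcond : ∀ n, 1 ≤ n →
      μ[X (n + 1) | MeasurableSpace.comap (fun ω => (N n ω, M n ω)) inferInstance]
        =ᵐ[μ] fun ω => θ * p + (1 - θ) * (N n ω / (N n ω + M n ω))) :
    ∀ᵐ ω ∂μ, Tendsto (fun n => N n ω / (N n ω + M n ω)) atTop (nhds p) :=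
  BHW_LLN_general μ p θ hp hθ X hXmeas hX01 N₀ M₀ hstart N M hN hM hcond
end

section
/- Evaluation of the diffusive limiting covariance integral: let A = [[a + b(α−β), a], [1 − a − b(α−β), 1 − a]], v₁ = (1/(1−b(α−β)))·(a, 1−a−b(α−β))^T, B = diag(a/(1−b(α−β)), (1−a−b(α−β))/(1−b(α−β))), and ψ_A(s) = e^{sA} − v₁·(1, 1)·∫₀^s e^{tA} dt. If 0 ≤ b(α−β) < 1/2, then ∫₀^∞ ψ_A(s)·B·ψ_A(s)^T·e^{−s} ds − v₁·v₁^T = [a(1−a−b(α−β))/((1−b(α−β))²(1−2b(α−β)))]·[[1, −1], [−1, 1]]. -/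
/-!
Write `λ = b(α−β)` and `P = v₁(1 1)`. The entries of `v₁` sum to `1`, so `P` is an
idempotent and `A = P + λ(1 − P)`; hence `e^{sA} = e^s P + e^{λs}(1 − P)`, and since
`P(1 − P) = 0`, subtracting `P∫₀^s e^{tA} dt` leaves `ψ_A(s) = P + e^{λs}(1 − P)`.
As `B = diag v₁`, the cross terms `P B (1 − P)ᵀ` vanish, `P B Pᵀ = v₁v₁ᵀ` and
`(1 − P) B (1 − P)ᵀ = diag v₁ − v₁v₁ᵀ`, so the integral is
`v₁v₁ᵀ + (diag v₁ − v₁v₁ᵀ)/(1 − 2λ)`. Finally, for `v₁ = (p, 1 − p)`,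
`diag v₁ − v₁v₁ᵀ = p(1 − p)[[1, −1], [−1, 1]]`.
-/

open Matrix MeasureTheory

noncomputable def matExp (A : Matrix (Fin 2) (Fin 2) ℝ) : Matrix (Fin 2) (Fin 2) ℝ :=
  ∑' n : ℕ, ((n.factorial : ℝ)⁻¹) • A ^ n

open scoped Nat

theorem IsIdempotentElem.smul_add_smul_one_sub_pow {S R : Type*} [CommRing S] [Ring R]
    [Algebra S R] {e : R} (he : IsIdempotentElem e) (x y : S) (n : ℕ) :
    (x • e + y • (1 - e)) ^ n = x ^ n • e + y ^ n • (1 - e) := by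
  induction n with
  | zero => simp
  | succ n ih =>
    rw [pow_succ, ih, pow_succ, pow_succ]
    simp only [add_mul, mul_add, smul_mul_smul_comm, he.eq, he.one_sub.eq,
      he.mul_one_sub_self, he.one_sub_mul_self, smul_zero, add_zero, zero_add]

theorem IsIdempotentElem.hasSum_exp_series {R : Type*} [Ring R] [Algebra ℝ R]
    [TopologicalSpace R] [ContinuousAdd R] [ContinuousSMul ℝ R] {e : R}
    (he : IsIdempotentElem e) (x y : ℝ) :
    HasSum (fun n : ℕ => (n !⁻¹ : ℝ) • (x • e + y • (1 - e)) ^ n)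
      (Real.exp x • e + Real.exp y • (1 - e)) := by
  have hexp (z : ℝ) : HasSum (fun n : ℕ => (n !⁻¹ : ℝ) * z ^ n) (Real.exp z) := by
    simpa [Real.exp_eq_exp_ℝ] using NormedSpace.exp_series_hasSum_exp' (𝕂 := ℝ) z
  simp only [he.smul_add_smul_one_sub_pow, smul_add, smul_smul]
  exact ((hexp x).smul_const e).add ((hexp y).smul_const (1 - e))

theorem matExp_smul_add_smul_one_sub {e : Matrix (Fin 2) (Fin 2) ℝ} (he : IsIdempotentElem e)
    (x y : ℝ) : matExp (x • e + y • (1 - e)) = Real.exp x • e + Real.exp y • (1 - e) :=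
  (he.hasSum_exp_series x y).tsum_eq

theorem Matrix.of_intervalIntegral_smul_add_smul {m n : Type*} {f g : ℝ → ℝ} {r s : ℝ}
    (hf : IntervalIntegrable f volume r s) (hg : IntervalIntegrable g volume r s)
    (P Q : Matrix m n ℝ) :
    (of fun i j => ∫ t in r..s, (f t • P + g t • Q) i j) =
      (∫ t in r..s, f t) • P + (∫ t in r..s, g t) • Q := by
  ext i j
  simp only [of_apply, add_apply, smul_apply, smul_eq_mul]
  rw [intervalIntegral.integral_add (hf.mul_const _) (hg.mul_const _),
    intervalIntegral.integral_mul_const, intervalIntegral.integral_mul_const]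

/-- The paper's `ψ_A` is `psi (v₁(1 1)) A`. -/
noncomputable def psi (P A : Matrix (Fin 2) (Fin 2) ℝ) (s : ℝ) : Matrix (Fin 2) (Fin 2) ℝ :=
  matExp (s • A) - P * of fun i j => ∫ t in (0 : ℝ)..s, matExp (t • A) i j

theorem psi_add_smul_one_sub {e : Matrix (Fin 2) (Fin 2) ℝ} (he : IsIdempotentElem e)
    (l s : ℝ) : psi e (e + l • (1 - e)) s = e + Real.exp (l * s) • (1 - e) := by
  have hexp (t : ℝ) :
      matExp (t • (e + l • (1 - e))) = Real.exp t • e + Real.exp (l * t) • (1 - e) := by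
    rw [smul_add, smul_smul, mul_comm, matExp_smul_add_smul_one_sub he]
  simp only [psi, hexp]
  rw [of_intervalIntegral_smul_add_smul (f := Real.exp) (g := fun t => Real.exp (l * t))
    (Real.continuous_exp.intervalIntegrable _ _)
    ((Real.continuous_exp.comp (continuous_const_mul l)).intervalIntegrable _ _), integral_exp,
    Real.exp_zero, mul_add, mul_smul_comm, mul_smul_comm, he.eq, he.mul_one_sub_self, smul_zero,
    add_zero, sub_smul, one_smul]
  abel

theorem Matrix.isIdempotentElem_vecMulVec {n α : Type*} [Fintype n] [CommSemiring α]
    {v w : n → α} (h : w ⬝ᵥ v = 1) : IsIdempotentElem (vecMulVec v w) := by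
  rw [IsIdempotentElem, vecMulVec_mul_vecMulVec, h, one_smul]

theorem Matrix.add_smul_mul_mul_transpose_add_smul {n α : Type*} [Fintype n] [CommSemiring α]
    {P Q D : Matrix n n α} (hPQ : P * D * Qᵀ = 0) (hQP : Q * D * Pᵀ = 0) (c : α) :
    (P + c • Q) * D * (P + c • Q)ᵀ = P * D * Pᵀ + c ^ 2 • (Q * D * Qᵀ) := by
  simp only [transpose_add, transpose_smul, add_mul, mul_add, Matrix.smul_mul, Matrix.mul_smul,
    hPQ, hQP, smul_zero, add_zero, zero_add, smul_smul, sq]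

section ProbabilityVector

variable {n α : Type*} [Fintype n] [DecidableEq n] [CommRing α] {v : n → α}

theorem Matrix.vecMulVec_one_mul_diagonal :
    vecMulVec v 1 * diagonal v = vecMulVec v v := by
  rw [vecMulVec_mul]
  congr 1
  ext i
  rw [vecMul_diagonal, Pi.one_apply, one_mul]

theorem Matrix.diagonal_mul_transpose_vecMulVec_one :
    diagonal v * (vecMulVec v 1)ᵀ = vecMulVec v v := by
  rw [← diagonal_transpose, ← transpose_mul, vecMulVec_one_mul_diagonal, transpose_vecMulVec]

theorem Matrix.vecMulVec_one_mul_diagonal_mul_transpose (hv : v ⬝ᵥ 1 = 1) :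
    vecMulVec v 1 * diagonal v * (vecMulVec v 1)ᵀ = vecMulVec v v := by
  rw [vecMulVec_one_mul_diagonal, transpose_vecMulVec, vecMulVec_mul_vecMulVec, hv, one_smul]

theorem Matrix.vecMulVec_one_mul_diagonal_mul_one_sub_transpose (hv : v ⬝ᵥ 1 = 1) :
    vecMulVec v 1 * diagonal v * (1 - vecMulVec v 1)ᵀ = 0 := by
  rw [transpose_sub, transpose_one, mul_sub, mul_one, vecMulVec_one_mul_diagonal_mul_transpose hv,
    vecMulVec_one_mul_diagonal, sub_self]

theorem Matrix.one_sub_vecMulVec_one_mul_diagonal_mul_transpose (hv : v ⬝ᵥ 1 = 1) :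
    (1 - vecMulVec v 1) * diagonal v * (vecMulVec v 1)ᵀ = 0 := by
  rw [sub_mul, one_mul, sub_mul, vecMulVec_one_mul_diagonal_mul_transpose hv,
    diagonal_mul_transpose_vecMulVec_one, sub_self]

theorem Matrix.one_sub_vecMulVec_one_mul_diagonal_mul_one_sub_transpose (hv : v ⬝ᵥ 1 = 1) :
    (1 - vecMulVec v 1) * diagonal v * (1 - vecMulVec v 1)ᵀ = diagonal v - vecMulVec v v := by
  rw [transpose_sub, transpose_one, mul_sub, mul_one,
    one_sub_vecMulVec_one_mul_diagonal_mul_transpose hv, sub_zero, sub_mul, one_mul,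
    vecMulVec_one_mul_diagonal]

end ProbabilityVector

theorem Matrix.diagonal_sub_vecMulVec_fin_two {v : Fin 2 → ℝ} (hv : v 0 + v 1 = 1) :
    diagonal v - vecMulVec v v = (v 0 * v 1) • !![(1 : ℝ), -1; -1, 1] := by
  have hv1 : v 1 = 1 - v 0 := by linarith
  ext i j
  fin_cases i <;> fin_cases j <;> simp [vecMulVec_apply, hv1] <;> ring

theorem integral_Ioi_add_exp_mul_mul_exp_neg {c : ℝ} (hc : c < 1) (x y : ℝ) :
    ∫ s in Set.Ioi (0 : ℝ), (x + Real.exp (c * s) * y) * Real.exp (-s) =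
      x + (1 - c)⁻¹ * y := by
  have hneg : (-1 : ℝ) < 0 := by norm_num
  have hc' : c - 1 < 0 := by linarith
  have hsplit (s : ℝ) : (x + Real.exp (c * s) * y) * Real.exp (-s) =
      x * Real.exp (-1 * s) + y * Real.exp ((c - 1) * s) := by
    rw [add_mul, mul_assoc, mul_comm (Real.exp _), mul_assoc, ← Real.exp_add]
    ring_nf
  simp only [hsplit]
  rw [integral_add ((integrableOn_exp_mul_Ioi hneg 0).const_mul x)
      ((integrableOn_exp_mul_Ioi hc' 0).const_mul y),
    integral_const_mul, integral_const_mul, integral_exp_mul_Ioi hneg, integral_exp_mul_Ioi hc',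
    mul_zero, mul_zero, Real.exp_zero]
  field_simp [hc'.ne, (sub_pos.2 hc).ne']
  ring

section RankOneProjection

variable {v : Fin 2 → ℝ} (l : ℝ)

theorem psi_mul_diagonal_mul_transpose (hv : v ⬝ᵥ 1 = 1) (s : ℝ) :
    psi (vecMulVec v 1) (vecMulVec v 1 + l • (1 - vecMulVec v 1)) s * diagonal v *
        (psi (vecMulVec v 1) (vecMulVec v 1 + l • (1 - vecMulVec v 1)) s)ᵀ =
      vecMulVec v v + Real.exp (2 * l * s) • (diagonal v - vecMulVec v v) := by
  have hP : IsIdempotentElem (vecMulVec v 1) :=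
    isIdempotentElem_vecMulVec (by rwa [dotProduct_comm])
  rw [psi_add_smul_one_sub hP, add_smul_mul_mul_transpose_add_smul
      (vecMulVec_one_mul_diagonal_mul_one_sub_transpose hv)
      (one_sub_vecMulVec_one_mul_diagonal_mul_transpose hv),
    vecMulVec_one_mul_diagonal_mul_transpose hv,
    one_sub_vecMulVec_one_mul_diagonal_mul_one_sub_transpose hv, ← Real.exp_nat_mul]
  push_cast
  ring_nf

theorem integral_psi_mul_diagonal_mul_transpose (hv : v ⬝ᵥ 1 = 1) (hl : l < 1 / 2) :
    (of fun i j => ∫ s in Set.Ioi (0 : ℝ),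
        (psi (vecMulVec v 1) (vecMulVec v 1 + l • (1 - vecMulVec v 1)) s * diagonal v *
          (psi (vecMulVec v 1) (vecMulVec v 1 + l • (1 - vecMulVec v 1)) s)ᵀ) i j *
          Real.exp (-s)) =
      vecMulVec v v + (1 - 2 * l)⁻¹ • (diagonal v - vecMulVec v v) := by
  ext i j
  simp only [of_apply, psi_mul_diagonal_mul_transpose l hv, Matrix.add_apply, Matrix.smul_apply,
    smul_eq_mul]
  exact integral_Ioi_add_exp_mul_mul_exp_neg (by linarith) _ _

end RankOneProjection

theorem diffusive_covariance_integral_general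
    (α β a b : ℝ)
    (hdiff : b * (α - β) < 1 / 2)
    (A B : Matrix (Fin 2) (Fin 2) ℝ) (v₁ : Fin 2 → ℝ)
    (hA : A = !![a + b * (α - β), a; 1 - a - b * (α - β), 1 - a])
    (hv₁ : v₁ = (1 / (1 - b * (α - β))) • ![a, 1 - a - b * (α - β)])
    (hB : B = Matrix.diagonal ![a / (1 - b * (α - β)),
      (1 - a - b * (α - β)) / (1 - b * (α - β))])
    -- `ψ_A(s) = e^{sA} − v₁ (1 1) ∫₀^s e^{tA} dt`, the inner integral being entrywise
    (ψ : ℝ → Matrix (Fin 2) (Fin 2) ℝ)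
    (hψ : ∀ s : ℝ, ψ s = matExp (s • A) -
      Matrix.vecMulVec v₁ ![1, 1] *
        Matrix.of (fun i j => ∫ t in (0 : ℝ)..s, matExp (t • A) i j)) :
    (Matrix.of fun i j =>
        ∫ s in Set.Ioi (0 : ℝ), (ψ s * B * (ψ s)ᵀ) i j * Real.exp (-s)) -
      Matrix.vecMulVec v₁ v₁ =
    (a * (1 - a - b * (α - β)) /
      ((1 - b * (α - β)) ^ 2 * (1 - 2 * (b * (α - β))))) • !![(1 : ℝ), -1; -1, 1] := by
  set l := b * (α - β)
  have hl : 1 - l ≠ 0 := by linarith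
  have hv₁0 : v₁ 0 = a / (1 - l) := by simp [hv₁, div_eq_inv_mul]
  have hv₁1 : v₁ 1 = (1 - a - l) / (1 - l) := by simp [hv₁, div_eq_inv_mul]
  have hsum : v₁ 0 + v₁ 1 = 1 := by rw [hv₁0, hv₁1]; field_simp; ring
  have hv₁one : v₁ ⬝ᵥ 1 = 1 := by rwa [dotProduct_one, Fin.sum_univ_two]
  have hA' : A = vecMulVec v₁ 1 + l • (1 - vecMulVec v₁ 1) := by
    ext i j
    fin_cases i <;> fin_cases j <;> simp [hA, hv₁0, hv₁1] <;> field_simp <;> ring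
  have hB' : B = diagonal v₁ := by
    rw [hB, ← hv₁0, ← hv₁1]
    congr 1
    ext i
    fin_cases i <;> rfl
  have hψ' : ψ = psi (vecMulVec v₁ 1) A := by
    ext1 s
    rw [hψ, psi, show (![1, 1] : Fin 2 → ℝ) = 1 by ext i; fin_cases i <;> rfl]
  rw [hψ', hB', hA', integral_psi_mul_diagonal_mul_transpose l hv₁one hdiff, add_sub_cancel_left,
    diagonal_sub_vecMulVec_fin_two hsum, smul_smul, hv₁0, hv₁1]
  congr 1
  field_simp

/-- Evaluation of the diffusive limiting covariance integral (equation (17) of the paper):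
with `A` the mean replacement matrix, `v₁` its Perron right eigenvector, `B` the mean
quadratic replacement matrix and `ψ_A(s) = e^{sA} − v₁(1,1)∫₀^s e^{tA} dt`, if
`0 ≤ b(α−β) < 1/2` then
`∫₀^∞ ψ_A(s) B ψ_A(s)ᵀ e^{−s} ds − v₁v₁ᵀ
  = a(1−a−b(α−β))/((1−b(α−β))²(1−2b(α−β))) [[1, −1], [−1, 1]]`
(all integrals being entrywise). -/
theorem diffusive_covariance_integral
    (α β a b : ℝ)
    (hα : α ∈ Set.Ioo (0 : ℝ) 1) (hβ : β ∈ Set.Ioo (0 : ℝ) 1)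
    (hαβ : α + β ≤ 1) (hab0 : 0 ≤ a + b) (hab1 : a + b ≤ 1)
    (hpos : 0 ≤ b * (α - β)) (hdiff : b * (α - β) < 1 / 2)
    (A B : Matrix (Fin 2) (Fin 2) ℝ) (v₁ : Fin 2 → ℝ)
    (hA : A = !![a + b * (α - β), a; 1 - a - b * (α - β), 1 - a])
    (hv₁ : v₁ = (1 / (1 - b * (α - β))) • ![a, 1 - a - b * (α - β)])
    (hB : B = Matrix.diagonal ![a / (1 - b * (α - β)),
      (1 - a - b * (α - β)) / (1 - b * (α - β))])
    -- `ψ_A(s) = e^{sA} − v₁ (1 1) ∫₀^s e^{tA} dt`, the inner integral being entrywise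
    (ψ : ℝ → Matrix (Fin 2) (Fin 2) ℝ)
    (hψ : ∀ s : ℝ, ψ s = matExp (s • A) -
      Matrix.vecMulVec v₁ ![1, 1] *
        Matrix.of (fun i j => ∫ t in (0 : ℝ)..s, matExp (t • A) i j)) :
    (Matrix.of fun i j =>
        ∫ s in Set.Ioi (0 : ℝ), (ψ s * B * (ψ s)ᵀ) i j * Real.exp (-s)) -
      Matrix.vecMulVec v₁ v₁ =
    (a * (1 - a - b * (α - β)) /
      ((1 - b * (α - β)) ^ 2 * (1 - 2 * (b * (α - β))))) • !![(1 : ℝ), -1; -1, 1] :=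
  diffusive_covariance_integral_general α β a b hdiff A B v₁ hA hv₁ hB ψ hψ
end

section
/- Diffusive-case covariance identity: let A = [[a + b(α−β), a], [1 − a − b(α−β), 1 − a]] and Σ₁ = [a(1−a−b(α−β))/((1−b(α−β))²(1−2b(α−β)))]·[[1, −1], [−1, 1]], with 0 ≤ b(α−β) < 1/2. Then for all 0 < s ≤ t, s·Σ₁·e^{log(t/s)·A^T} = s·(t/s)^{b(α−β)}·Σ₁, where e^{log(t/s)·A^T} is the matrix exponential of log(t/s)·A^T. -/
/-!
The vector `(1, -1)` satisfies `A (1, -1)ᵀ = b(α-β) (1, -1)ᵀ`, and both rows of `Σ₁` are multiples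
of `(1, -1)`. Hence `Σ₁ Aᵀ = b(α-β) Σ₁`, and the exponential series collapses termwise to
`Σ₁ e^{log(t/s) Aᵀ} = e^{b(α-β) log(t/s)} Σ₁ = (t/s)^{b(α-β)} Σ₁`.
-/

open Matrix

open NormedSpace

theorem mul_exp_eq_exp_smul_of_mul_eq_smul {𝕂 𝔸 : Type*} [RCLike 𝕂] [NormedRing 𝔸]
    [NormedAlgebra 𝕂 𝔸] [CompleteSpace 𝔸] {x m : 𝔸} {μ : 𝕂} (h : x * m = μ • x) :
    x * exp m = exp μ • x := by
  let : NormedAlgebra ℚ 𝔸 := NormedAlgebra.restrictScalars ℚ 𝕂 𝔸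
  have hsemi : SemiconjBy x m (algebraMap 𝕂 𝔸 μ) := by
    rw [SemiconjBy, h, Algebra.smul_def]
  rw [hsemi.exp_right, ← algebraMap_exp_comm, ← Algebra.smul_def]

theorem matExp_eq_exp (M : Matrix (Fin 2) (Fin 2) ℝ) : matExp M = exp M := by
  rw [matExp, exp_eq_tsum ℝ]

theorem mul_matExp_of_mul_eq_smul {S M : Matrix (Fin 2) (Fin 2) ℝ} {μ : ℝ}
    (h : S * M = μ • S) : S * matExp M = Real.exp μ • S := by
  rw [matExp_eq_exp, Real.exp_eq_exp_ℝ]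
  -- `exp` does not depend on the choice of a Banach-algebra norm on matrices
  exact open scoped Norms.Operator in mul_exp_eq_exp_smul_of_mul_eq_smul h

theorem outer_one_neg_one_mul_transpose (p q δ : ℝ) :
    !![(1 : ℝ), -1; -1, 1] * (!![p + δ, p; q - δ, q])ᵀ = δ • !![(1 : ℝ), -1; -1, 1] := by
  ext i j
  fin_cases i <;> fin_cases j <;> simp [Matrix.mul_apply, Fin.sum_univ_two]
  ring

theorem diffusive_covariance_identity_general
    (α β a b : ℝ)
    (A S : Matrix (Fin 2) (Fin 2) ℝ)
    (hA : A = !![a + b * (α - β), a; 1 - a - b * (α - β), 1 - a])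
    (hS : S = (a * (1 - a - b * (α - β)) /
      ((1 - b * (α - β)) ^ 2 * (1 - 2 * (b * (α - β))))) • !![(1 : ℝ), -1; -1, 1]) :
    ∀ s t : ℝ, 0 < s → s ≤ t →
      s • (S * matExp (Real.log (t / s) • Aᵀ)) = (s * (t / s) ^ (b * (α - β))) • S := by
  intro s t hs hst
  have hSA : S * (Real.log (t / s) • Aᵀ) = (Real.log (t / s) * (b * (α - β))) • S := by
    rw [hA, hS, Matrix.mul_smul, Matrix.smul_mul, outer_one_neg_one_mul_transpose]
    module
  rw [mul_matExp_of_mul_eq_smul hSA, smul_smul,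
    ← Real.rpow_def_of_pos (div_pos (hs.trans_le hst) hs)]

/-- Diffusive-case covariance identity (equation (22) and the computation following it in the
paper): with `A = [[a + b(α−β), a], [1 − a − b(α−β), 1 − a]]` and
`Σ₁ = a(1−a−b(α−β))/((1−b(α−β))²(1−2b(α−β))) [[1, −1], [−1, 1]]`, for all `0 < s ≤ t` one has
`s Σ₁ e^{log(t/s) Aᵀ} = s (t/s)^{b(α−β)} Σ₁`. -/
theorem diffusive_covariance_identity
    (α β a b : ℝ)
    (hα : α ∈ Set.Ioo (0 : ℝ) 1) (hβ : β ∈ Set.Ioo (0 : ℝ) 1)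
    (hαβ : α + β ≤ 1) (hab0 : 0 ≤ a + b) (hab1 : a + b ≤ 1)
    (hpos : 0 ≤ b * (α - β)) (hdiff : b * (α - β) < 1 / 2)
    (A S : Matrix (Fin 2) (Fin 2) ℝ)
    (hA : A = !![a + b * (α - β), a; 1 - a - b * (α - β), 1 - a])
    (hS : S = (a * (1 - a - b * (α - β)) /
      ((1 - b * (α - β)) ^ 2 * (1 - 2 * (b * (α - β))))) • !![(1 : ℝ), -1; -1, 1]) :
    ∀ s t : ℝ, 0 < s → s ≤ t →
      s • (S * matExp (Real.log (t / s) • Aᵀ)) = (s * (t / s) ^ (b * (α - β))) • S :=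
  diffusive_covariance_identity_general α β a b A S hA hS
end
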